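/- Let 0 < b < 1, p > 0, and let u₂ be the characteristic function of the closed ellipse pE^{b,0} = { (x₁,x₂) : (x₁/p)² + (x₂/(pb))² ≤ 1 }, with pE^{b,0} ⊂ Ω. Then for every a ∈ (0,1], with orientation angle θ = π/2, DTV^{a,π/2}(u₂) = p ∫₀^{2π} ( sin²τ + a² b² cos²τ )^{1/2} dτ. -/

import Mathlib

open MeasureTheory Filter
open scoped ENNReal Topology Pointwise

noncomputable section

abbrev E2 := EuclideanSpace ℝ (Fin 2)

/-- Build a vector of `ℝ²` from its coordinates. -/
def vec2 (x y : ℝ) : E2 := (WithLp.equiv 2 (Fin 2 → ℝ)).symm ![x, y]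

/-- The elliptical set `E^{a,θ}`. -/
def Ellip (a θ : ℝ) : Set E2 :=
  {x : E2 | (x 0 * Real.cos θ + x 1 * Real.sin θ) ^ 2 +
      ((-(x 0) * Real.sin θ + x 1 * Real.cos θ) / a) ^ 2 ≤ 1}

/-- Partial derivative in the `i`-th coordinate direction. -/
def pd (i : Fin 2) (f : E2 → ℝ) (x : E2) : ℝ :=
  fderiv ℝ f x (EuclideanSpace.single i 1)

/-- Divergence of a vector field on `ℝ²`. -/
def divVec (v : E2 → E2) (x : E2) : ℝ :=
  pd 0 (fun y => v y 0) x + pd 1 (fun y => v y 1) x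

/-- `C¹` vector fields compactly supported in `Ω`. -/
def Cc1 (Ω : Set E2) (v : E2 → E2) : Prop :=
  ContDiff ℝ 1 v ∧ HasCompactSupport v ∧ tsupport v ⊆ Ω

/-- The directional total variation `DTV^{a,θ}`. -/
def DTV (Ω : Set E2) (a θ : ℝ) (u : E2 → ℝ) : ℝ≥0∞ :=
  ⨆ v ∈ {v : E2 → E2 | Cc1 Ω v ∧ ∀ x ∈ Ω, v x ∈ Ellip a θ},
    ENNReal.ofReal (∫ x in Ω, u x * divVec v x)

/-- The total variation. -/
def TV (Ω : Set E2) (u : E2 → ℝ) : ℝ≥0∞ :=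
  ⨆ v ∈ {v : E2 → E2 | Cc1 Ω v ∧ ∀ x ∈ Ω, ‖v x‖ ≤ 1},
    ENNReal.ofReal (∫ x in Ω, u x * divVec v x)

abbrev Mat2 := Matrix (Fin 2) (Fin 2) ℝ

/-- The rotation matrix `R_θ`. -/
def Rmat (θ : ℝ) : Mat2 := !![Real.cos θ, -Real.sin θ; Real.sin θ, Real.cos θ]

/-- The matrix `Λ_a = diag(1,a)`. -/
def Lmat (a : ℝ) : Mat2 := !![1, 0; 0, a]

/-- Symmetric `2×2` matrices whose rows and columns lie in `S ⊆ ℝ²`. -/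
def rowcol (S : Set E2) : Set Mat2 :=
  {V : Mat2 | V.IsSymm ∧ (∀ i : Fin 2, vec2 (V i 0) (V i 1) ∈ S) ∧
    ∀ j : Fin 2, vec2 (V 0 j) (V 1 j) ∈ S}

/-- `E^{a,θ}_{2×2}`. -/
def EllipM (a θ : ℝ) : Set Mat2 := rowcol (Ellip a θ)

/-- `B_{2×2}`. -/
def BallM : Set Mat2 := rowcol (Metric.closedBall 0 1)

/-- Divergence of a (symmetric) matrix field. -/
def divMat (W : E2 → Mat2) (x : E2) : E2 :=
  vec2 (pd 0 (fun y => W y 0 0) x + pd 1 (fun y => W y 0 1) x)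
    (pd 0 (fun y => W y 1 0) x + pd 1 (fun y => W y 1 1) x)

/-- Second-order divergence of a matrix field. -/
def div2Mat (W : E2 → Mat2) (x : E2) : ℝ :=
  pd 0 (pd 0 (fun y => W y 0 0)) x + pd 1 (pd 1 (fun y => W y 1 1)) x +
    2 * pd 0 (pd 1 (fun y => W y 0 1)) x

/-- `C²` symmetric-matrix fields compactly supported in `Ω`. -/
def Cc2Sym (Ω : Set E2) (W : E2 → Mat2) : Prop :=
  (∀ i j : Fin 2, ContDiff ℝ 2 (fun x => W x i j)) ∧ HasCompactSupport W ∧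
    tsupport W ⊆ Ω ∧ ∀ x, (W x).IsSymm

/-- The second-order directional total generalized variation `DTGV²_λ`. -/
def DTGV2 (Ω : Set E2) (a θ l0 l1 : ℝ) (u : E2 → ℝ) : ℝ≥0∞ :=
  ⨆ W ∈ {W : E2 → Mat2 | Cc2Sym Ω W ∧ (∀ x ∈ Ω, W x ∈ l0 • EllipM a θ) ∧
      ∀ x ∈ Ω, divMat W x ∈ l1 • Ellip a θ},
    ENNReal.ofReal (∫ x in Ω, u x * div2Mat W x)

/-- The second-order total generalized variation `TGV²_λ`. -/
def TGV2 (Ω : Set E2) (l0 l1 : ℝ) (u : E2 → ℝ) : ℝ≥0∞ :=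
  ⨆ W ∈ {W : E2 → Mat2 | Cc2Sym Ω W ∧ (∀ x ∈ Ω, W x ∈ l0 • BallM) ∧
      ∀ x ∈ Ω, divMat W x ∈ Metric.closedBall 0 l1},
    ENNReal.ofReal (∫ x in Ω, u x * div2Mat W x)

/-- The closed ellipse `pE^{b,0}` with semi-axes `p` and `pb`. -/
def pEllipse (p b : ℝ) : Set E2 := {x : E2 | (x 0 / p) ^ 2 + (x 1 / (p * b)) ^ 2 ≤ 1}

/-!
Green's theorem on the ellipse `K = pE^{b,0}`, with boundary `γ(τ) = (p cos τ, p b sin τ)`, turns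
`∫_K div v` into the flux `∫₀^{2π} ⟨v(γ τ), ν τ⟩ dτ`, where `ν(τ) = (p b cos τ, p sin τ)`. For
`w ∈ E^{a,π/2}` (that is, `(w₀/a)² + w₁² ≤ 1`), Cauchy–Schwarz gives
`⟨w, ν⟩ ≤ √((a ν₀)² + ν₁²) = p √(sin² τ + a² b² cos² τ)`, which is the upper bound. The bound is
attained by `η(x) · m(b x₀, x₁ / b)`, where `m(n)` is the maximizer of `⟨·, n⟩` on the ellipse
(`(b x₀, x₁ / b)` equals `ν` on the boundary) and `η` is a smooth cutoff that is `1` on the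
boundary curve and vanishes near `0`, where `m` is singular, and outside `Ω`.
Green's theorem itself is proved by slicing (Fubini, then the fundamental theorem of calculus on
each slice) followed by the substitution `y = p b sin τ`.
-/

open Set Real

section EllipseRegion
variable {α β : ℝ}

def ellipseRegion (α β : ℝ) : Set (ℝ × ℝ) := {q | (q.1 / α) ^ 2 + (q.2 / β) ^ 2 ≤ 1}

def halfWidth (α β t : ℝ) : ℝ := α * √(1 - (t / β) ^ 2)

@[fun_prop]
lemma continuous_halfWidth : Continuous (halfWidth α β) := by
  unfold halfWidth; fun_prop

lemma sq_div_le_one_iff {x γ : ℝ} (hγ : 0 < γ) : (x / γ) ^ 2 ≤ 1 ↔ |x| ≤ γ := by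
  rw [sq_le_one_iff_abs_le_one, abs_div, abs_of_pos hγ, div_le_one hγ]

lemma mem_ellipseRegion_iff (hα : 0 < α) (hβ : 0 < β) {x y : ℝ} :
    (x, y) ∈ ellipseRegion α β ↔ |y| ≤ β ∧ |x| ≤ halfWidth α β y := by
  change (x / α) ^ 2 + (y / β) ^ 2 ≤ 1 ↔ _
  rw [← sq_div_le_one_iff hβ, halfWidth, ← div_le_iff₀' hα, ← abs_of_pos hα, ← abs_div,
    abs_of_pos hα]
  constructor
  · intro h
    have hy : (y / β) ^ 2 ≤ 1 := by nlinarith [sq_nonneg (x / α)]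
    rw [Real.le_sqrt (abs_nonneg _) (by linarith), sq_abs]
    exact ⟨hy, by linarith⟩
  · rintro ⟨hy, hx⟩
    rw [Real.le_sqrt (abs_nonneg _) (by linarith), sq_abs] at hx
    linarith

lemma isCompact_ellipseRegion (hα : 0 < α) (hβ : 0 < β) : IsCompact (ellipseRegion α β) := by
  refine (isCompact_Icc (a := -α) (b := α)).prod (isCompact_Icc (a := -β) (b := β))
    |>.of_isClosed_subset (isClosed_le (by fun_prop) continuous_const) fun q hq => ?_
  have h1 : (q.1 / α) ^ 2 ≤ 1 := by nlinarith [sq_nonneg (q.2 / β), hq.out]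
  have h2 : (q.2 / β) ^ 2 ≤ 1 := by nlinarith [sq_nonneg (q.1 / α), hq.out]
  exact ⟨abs_le.1 ((sq_div_le_one_iff hα).1 h1), abs_le.1 ((sq_div_le_one_iff hβ).1 h2)⟩

lemma integral_slice_ellipseRegion (hα : 0 < α) (hβ : 0 < β) {g G : ℝ × ℝ → ℝ}
    (hg : Continuous g) (hG : ∀ x y, HasDerivAt (fun s => G (s, y)) (g (x, y)) x) (y : ℝ) :
    ∫ x, (ellipseRegion α β).indicator g (x, y) =
      (Icc (-β) β).indicator (fun y => G (halfWidth α β y, y) - G (-halfWidth α β y, y)) y := by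
  by_cases hy : |y| ≤ β
  · have hW : -halfWidth α β y ≤ halfWidth α β y := by
      have : 0 ≤ halfWidth α β y := mul_nonneg hα.le (sqrt_nonneg _)
      linarith
    have hslice : (fun x => (ellipseRegion α β).indicator g (x, y)) =
        (Icc (-halfWidth α β y) (halfWidth α β y)).indicator fun x => g (x, y) := by
      have : (fun x => (x, y)) ⁻¹' ellipseRegion α β =
          Icc (-halfWidth α β y) (halfWidth α β y) := by
        ext x
        rw [mem_preimage, mem_ellipseRegion_iff hα hβ, mem_Icc, ← abs_le, and_iff_right hy]
      rw [← this]
      exact funext fun x => (indicator_comp_right (g := g) fun x => (x, y)).symm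
    rw [hslice, integral_indicator measurableSet_Icc, integral_Icc_eq_integral_Ioc,
      ← intervalIntegral.integral_of_le hW, intervalIntegral.integral_eq_sub_of_hasDerivAt
        (fun x _ => hG x y) ((by fun_prop : Continuous fun x => g (x, y)).intervalIntegrable _ _),
      indicator_of_mem (show y ∈ Icc (-β) β from abs_le.1 hy)]
  · have hslice : (fun x => (ellipseRegion α β).indicator g (x, y)) = fun _ => 0 := by
      ext x
      simp [mem_ellipseRegion_iff hα hβ, hy]
    rw [hslice, indicator_of_notMem (show y ∉ Icc (-β) β from fun h => hy (abs_le.2 h)),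
      integral_zero]

lemma integral_ellipseRegion_eq_intervalIntegral (hα : 0 < α) (hβ : 0 < β) {g G : ℝ × ℝ → ℝ}
    (hg : Continuous g) (hG : ∀ x y, HasDerivAt (fun s => G (s, y)) (g (x, y)) x) :
    ∫ q in ellipseRegion α β, g q =
      ∫ y in -β..β, (G (halfWidth α β y, y) - G (-halfWidth α β y, y)) := by
  have hS := isCompact_ellipseRegion hα hβ
  rw [← integral_indicator hS.isClosed.measurableSet, Measure.volume_eq_prod,
    integral_prod_symm _ ((integrable_indicator_iff hS.isClosed.measurableSet).2
      (hg.continuousOn.integrableOn_compact hS))]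
  simp only [integral_slice_ellipseRegion hα hβ hg hG]
  rw [integral_indicator measurableSet_Icc, integral_Icc_eq_integral_Ioc,
    ← intervalIntegral.integral_of_le (by linarith)]

lemma halfWidth_mul_sin (hβ : β ≠ 0) (τ : ℝ) : halfWidth α β (β * sin τ) = α * |cos τ| := by
  rw [halfWidth, mul_div_cancel_left₀ _ hβ, ← cos_sq', sqrt_sq_eq_abs]

lemma integral_halfWidth_eq_integral_arc (hβ : β ≠ 0) {H : ℝ × ℝ → ℝ} (hH : Continuous H) :
    ∫ τ in -(π / 2)..π / 2, H (α * cos τ, β * sin τ) * (β * cos τ) =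
      ∫ y in -β..β, H (halfWidth α β y, y) := by
  have hcongr : EqOn (fun τ => H (α * cos τ, β * sin τ) * (β * cos τ))
      (fun τ => ((fun y => H (halfWidth α β y, y)) ∘ fun τ => β * sin τ) τ * (β * cos τ))
      (uIcc (-(π / 2)) (π / 2)) := by
    intro τ hτ
    rw [uIcc_of_le (by linarith [pi_pos])] at hτ
    simp only [Function.comp_apply, halfWidth_mul_sin hβ, abs_of_nonneg (cos_nonneg_of_mem_Icc hτ)]
  rw [intervalIntegral.integral_congr hcongr, intervalIntegral.integral_comp_mul_deriv
    (fun τ _ => (hasDerivAt_sin τ).const_mul β) (by fun_prop) (by fun_prop)]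
  simp

-- The right half of the boundary is the arc `τ ∈ [-π/2, π/2]`; the left half is its mirror image
-- under `τ ↦ π - τ`.
lemma integral_halfWidth_sub_eq_integral_boundary (hβ : β ≠ 0) {G : ℝ × ℝ → ℝ}
    (hG : Continuous G) :
    ∫ y in -β..β, (G (halfWidth α β y, y) - G (-halfWidth α β y, y)) =
      ∫ τ in 0..2 * π, G (α * cos τ, β * sin τ) * (β * cos τ) := by
  set F := fun τ => G (α * cos τ, β * sin τ) * (β * cos τ)
  have hF : Continuous F := by fun_prop
  have hper : Function.Periodic F (2 * π) := fun τ => by simp [F]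
  have hreflect : ∫ τ in π / 2..-(π / 2) + 2 * π, F τ =
      -∫ τ in -(π / 2)..π / 2, G (-(α * cos τ), β * sin τ) * (β * cos τ) := by
    have h := intervalIntegral.integral_comp_sub_left F π (a := -(π / 2)) (b := π / 2)
    rw [show π - π / 2 = π / 2 by ring, show π - -(π / 2) = -(π / 2) + 2 * π by ring] at h
    rw [← h, ← intervalIntegral.integral_neg]
    simp [F, cos_pi_sub, sin_pi_sub]
  calc ∫ y in -β..β, (G (halfWidth α β y, y) - G (-halfWidth α β y, y))
      = (∫ τ in -(π / 2)..π / 2, F τ) + ∫ τ in π / 2..-(π / 2) + 2 * π, F τ := by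
        rw [hreflect, intervalIntegral.integral_sub ((by fun_prop : Continuous fun y =>
          G (halfWidth α β y, y)).intervalIntegrable _ _) ((by fun_prop : Continuous fun y =>
          G (-halfWidth α β y, y)).intervalIntegrable _ _),
          ← integral_halfWidth_eq_integral_arc hβ hG,
          ← integral_halfWidth_eq_integral_arc hβ (H := fun q => G (-q.1, q.2)) (by fun_prop)]
        ring
    _ = ∫ τ in 0..2 * π, F τ := by
        rw [intervalIntegral.integral_add_adjacent_intervals (hF.intervalIntegrable _ _)
          (hF.intervalIntegrable _ _)]
        simpa using hper.intervalIntegral_add_eq (-(π / 2)) 0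

theorem integral_ellipseRegion_of_hasDerivAt_fst (hα : 0 < α) (hβ : 0 < β) {g G : ℝ × ℝ → ℝ}
    (hg : Continuous g) (hGc : Continuous G)
    (hG : ∀ x y, HasDerivAt (fun s => G (s, y)) (g (x, y)) x) :
    ∫ q in ellipseRegion α β, g q = ∫ τ in 0..2 * π, G (α * cos τ, β * sin τ) * (β * cos τ) := by
  rw [integral_ellipseRegion_eq_intervalIntegral hα hβ hg hG,
    integral_halfWidth_sub_eq_integral_boundary hβ.ne' hGc]

theorem integral_ellipseRegion_of_hasDerivAt_snd (hα : 0 < α) (hβ : 0 < β) {g G : ℝ × ℝ → ℝ}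
    (hg : Continuous g) (hGc : Continuous G)
    (hG : ∀ x y, HasDerivAt (fun s => G (x, s)) (g (x, y)) y) :
    ∫ q in ellipseRegion α β, g q = ∫ τ in 0..2 * π, G (α * cos τ, β * sin τ) * (α * sin τ) := by
  -- Swap the coordinates, then reparametrize the boundary by `τ ↦ π/2 - τ`.
  have hswap : Prod.swap ⁻¹' ellipseRegion α β = ellipseRegion β α := by
    ext q
    simp only [ellipseRegion, mem_preimage, mem_ofPred_eq, Prod.fst_swap, Prod.snd_swap, add_comm]
  set F := fun τ => G (α * cos τ, β * sin τ) * (α * sin τ)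
  have hper : Function.Periodic F (2 * π) := fun τ => by simp [F]
  rw [Measure.volume_eq_prod, ← (Measure.measurePreserving_swap (μ := (volume : Measure ℝ))
      (ν := volume)).setIntegral_preimage_emb MeasurableEquiv.prodComm.measurableEmbedding g _,
    hswap, ← Measure.volume_eq_prod,
    integral_ellipseRegion_of_hasDerivAt_fst hβ hα (g := fun q => g q.swap)
      (G := fun q => G q.swap) (by fun_prop) (by fun_prop) fun y x => hG x y]
  calc ∫ τ in 0..2 * π, G (α * sin τ, β * cos τ) * (α * cos τ)
      = ∫ τ in 0..2 * π, F (π / 2 - τ) := by simp [F, cos_pi_div_two_sub, sin_pi_div_two_sub]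
    _ = ∫ τ in 0..2 * π, F τ := by
        rw [intervalIntegral.integral_comp_sub_left]
        simpa [sub_eq_neg_add] using hper.intervalIntegral_add_eq (π / 2 - 2 * π) 0

end EllipseRegion

@[simp] lemma vec2_apply_zero (x y : ℝ) : vec2 x y 0 = x := rfl

@[simp] lemma vec2_apply_one (x y : ℝ) : vec2 x y 1 = y := rfl

lemma continuous_vec2 : Continuous fun q : ℝ × ℝ => vec2 q.1 q.2 :=
  (PiLp.continuous_toLp 2 _).comp (by fun_prop)

lemma measurePreserving_vec2 : MeasurePreserving (fun q : ℝ × ℝ => vec2 q.1 q.2) :=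
  (EuclideanSpace.volume_preserving_symm_measurableEquiv_toLp (Fin 2)).symm.comp
    ((volume_preserving_finTwoArrow ℝ).symm)

lemma measurableEmbedding_vec2 : MeasurableEmbedding (fun q : ℝ × ℝ => vec2 q.1 q.2) :=
  (MeasurableEquiv.finTwoArrow.symm.trans (MeasurableEquiv.toLp 2 (Fin 2 → ℝ))).measurableEmbedding

lemma setIntegral_pEllipse_eq (p b : ℝ) (F : E2 → ℝ) :
    ∫ x in pEllipse p b, F x = ∫ q in ellipseRegion p (p * b), F (vec2 q.1 q.2) :=
  (measurePreserving_vec2.setIntegral_preimage_emb measurableEmbedding_vec2 F (pEllipse p b)).symm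

lemma hasDerivAt_pd_zero {f : E2 → ℝ} (hf : Differentiable ℝ f) (x y : ℝ) :
    HasDerivAt (fun s => f (vec2 s y)) (pd 0 f (vec2 x y)) x := by
  have h : HasDerivAt (fun s => vec2 s y) (EuclideanSpace.single 0 1) x := by
    have : (fun s => vec2 s y) = fun s => s • EuclideanSpace.single 0 1 + vec2 0 y := by
      ext s i; fin_cases i <;> simp [vec2]
    rw [this]
    simpa using ((hasDerivAt_id x).smul_const _).add_const (vec2 0 y)
  exact (hf _).hasFDerivAt.comp_hasDerivAt x h

lemma hasDerivAt_pd_one {f : E2 → ℝ} (hf : Differentiable ℝ f) (x y : ℝ) :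
    HasDerivAt (fun s => f (vec2 x s)) (pd 1 f (vec2 x y)) y := by
  have h : HasDerivAt (fun s => vec2 x s) (EuclideanSpace.single 1 1) y := by
    have : (fun s => vec2 x s) = fun s => s • EuclideanSpace.single 1 1 + vec2 x 0 := by
      ext s i; fin_cases i <;> simp [vec2]
    rw [this]
    simpa using ((hasDerivAt_id y).smul_const _).add_const (vec2 x 0)
  exact (hf _).hasFDerivAt.comp_hasDerivAt y h

lemma continuous_pd {f : E2 → ℝ} (hf : ContDiff ℝ 1 f) (i : Fin 2) : Continuous (pd i f) :=
  (hf.continuous_fderiv one_ne_zero).clm_apply continuous_const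

def ellipseBoundary (p b τ : ℝ) : E2 := vec2 (p * cos τ) (p * b * sin τ)

@[fun_prop]
lemma continuous_ellipseBoundary {p b : ℝ} : Continuous (ellipseBoundary p b) :=
  continuous_vec2.comp (f := fun τ => (p * cos τ, p * b * sin τ)) (by fun_prop)

-- `(p b cos τ, p sin τ)` is the outward normal of the boundary curve, scaled by its speed.
theorem integral_pEllipse_divVec {p b : ℝ} (hp : 0 < p) (hb : 0 < b) {v : E2 → E2}
    (hv : ContDiff ℝ 1 v) :
    ∫ x in pEllipse p b, divVec v x = ∫ τ in 0..2 * π,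
      (v (ellipseBoundary p b τ) 0 * (p * b * cos τ) +
        v (ellipseBoundary p b τ) 1 * (p * sin τ)) := by
  have hv0 : ContDiff ℝ 1 fun x => v x 0 := contDiff_euclidean.1 hv 0
  have hv1 : ContDiff ℝ 1 fun x => v x 1 := contDiff_euclidean.1 hv 1
  have hS := isCompact_ellipseRegion hp (mul_pos hp hb)
  have hg0 : Continuous fun q : ℝ × ℝ => pd 0 (fun y => v y 0) (vec2 q.1 q.2) :=
    (continuous_pd hv0 0).comp continuous_vec2
  have hg1 : Continuous fun q : ℝ × ℝ => pd 1 (fun y => v y 1) (vec2 q.1 q.2) :=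
    (continuous_pd hv1 1).comp continuous_vec2
  have hfst := integral_ellipseRegion_of_hasDerivAt_fst hp (mul_pos hp hb) hg0
    (G := fun q => v (vec2 q.1 q.2) 0) (hv0.continuous.comp continuous_vec2)
    fun x y => hasDerivAt_pd_zero (hv0.differentiable one_ne_zero) x y
  have hsnd := integral_ellipseRegion_of_hasDerivAt_snd hp (mul_pos hp hb) hg1
    (G := fun q => v (vec2 q.1 q.2) 1) (hv1.continuous.comp continuous_vec2)
    fun x y => hasDerivAt_pd_one (hv1.differentiable one_ne_zero) x y
  rw [setIntegral_pEllipse_eq]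
  simp only [divVec]
  rw [integral_add (hg0.continuousOn.integrableOn_compact hS)
    (hg1.continuousOn.integrableOn_compact hS), hfst, hsnd, intervalIntegral.integral_add]
  · rfl
  all_goals
    have hvc := hv.continuous
    exact Continuous.intervalIntegrable (by fun_prop) _ _

section SupportFunction
variable {a : ℝ}

lemma mem_Ellip_pi_div_two_iff {w : E2} : w ∈ Ellip a (π / 2) ↔ (w 0 / a) ^ 2 + w 1 ^ 2 ≤ 1 := by
  simp only [Ellip, mem_ofPred_eq, cos_pi_div_two, sin_pi_div_two]
  ring_nf

lemma mul_add_mul_le_sqrt_of_mem_Ellip (ha : a ≠ 0) {w : E2} (hw : w ∈ Ellip a (π / 2))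
    (n₀ n₁ : ℝ) : w 0 * n₀ + w 1 * n₁ ≤ √((a * n₀) ^ 2 + n₁ ^ 2) := by
  rw [mem_Ellip_pi_div_two_iff] at hw
  have hw₀ : w 0 = w 0 / a * a := (div_mul_cancel₀ _ ha).symm
  refine (le_abs_self _).trans (abs_le_sqrt ?_)
  rw [hw₀]
  nlinarith [sq_nonneg (w 0 / a * n₁ - w 1 * (a * n₀)), sq_nonneg (a * n₀), sq_nonneg n₁]

/-- The point of `E^{a,π/2}` at which `w ↦ w₀ n₀ + w₁ n₁` attains its maximum `√((a n₀)² + n₁²)`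
(it is `0` when `n = 0`). -/
def ellipMaximizer (a n₀ n₁ : ℝ) : E2 := (√((a * n₀) ^ 2 + n₁ ^ 2))⁻¹ • vec2 (a ^ 2 * n₀) n₁

lemma ellipMaximizer_mul_add_mul (a n₀ n₁ : ℝ) :
    ellipMaximizer a n₀ n₁ 0 * n₀ + ellipMaximizer a n₀ n₁ 1 * n₁ = √((a * n₀) ^ 2 + n₁ ^ 2) := by
  have h : ellipMaximizer a n₀ n₁ 0 * n₀ + ellipMaximizer a n₀ n₁ 1 * n₁ =
      ((a * n₀) ^ 2 + n₁ ^ 2) / √((a * n₀) ^ 2 + n₁ ^ 2) := by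
    simp only [ellipMaximizer, PiLp.smul_apply, smul_eq_mul, vec2_apply_zero, vec2_apply_one]
    ring
  rw [h, div_sqrt]

lemma smul_ellipMaximizer_mem_Ellip {t : ℝ} (ht : |t| ≤ 1) (n₀ n₁ : ℝ) :
    t • ellipMaximizer a n₀ n₁ ∈ Ellip a (π / 2) := by
  rw [mem_Ellip_pi_div_two_iff]
  set q := (a * n₀) ^ 2 + n₁ ^ 2
  have hq : 0 ≤ q := by positivity
  have h : ((t • ellipMaximizer a n₀ n₁) 0 / a) ^ 2 + (t • ellipMaximizer a n₀ n₁) 1 ^ 2 =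
      t ^ 2 * (q * (√q)⁻¹ ^ 2) := by
    simp only [ellipMaximizer, PiLp.smul_apply, smul_eq_mul, vec2_apply_zero, vec2_apply_one, q]
    field_simp
  rw [h, inv_pow, sq_sqrt hq]
  have ht2 : t ^ 2 ≤ 1 := by rwa [sq_le_one_iff_abs_le_one]
  rcases hq.eq_or_lt with h0 | hpos
  · simp [← h0]
  · rw [mul_inv_cancel₀ hpos.ne', mul_one]; exact ht2

end SupportFunction

lemma contDiff_vec2 {E : Type*} [NormedAddCommGroup E] [NormedSpace ℝ E] {n : WithTop ℕ∞}
    {f g : E → ℝ} (hf : ContDiff ℝ n f) (hg : ContDiff ℝ n g) :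
    ContDiff ℝ n fun x => vec2 (f x) (g x) :=
  contDiff_euclidean.2 fun i => by fin_cases i <;> simpa

lemma ContDiffOn.contDiff_smul_of_tsupport_subset {E F : Type*} [NormedAddCommGroup E]
    [NormedSpace ℝ E] [NormedAddCommGroup F] [NormedSpace ℝ F] {n : ℕ∞} {η : E → ℝ} {f : E → F}
    {U : Set E} (hU : IsOpen U) (hf : ContDiffOn ℝ n f U) (hη : ContDiff ℝ n η)
    (hsupp : tsupport η ⊆ U) : ContDiff ℝ n fun x => η x • f x :=
  contMDiff_iff_contDiff.1 <| contMDiff_of_tsupport fun _ hx => contMDiffAt_iff_contDiffAt.2 <|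
    hη.contDiffAt.smul (hf.contDiffAt (hU.mem_nhds (hsupp (tsupport_smul_subset_left _ _ hx))))

open scoped Manifold in
theorem exists_contDiff_tsupport_subset_eqOn_one {E : Type*} [NormedAddCommGroup E]
    [NormedSpace ℝ E] [FiniteDimensional ℝ E] {n : ℕ∞} {K U : Set E} (hK : IsCompact K)
    (hU : IsOpen U) (hKU : K ⊆ U) :
    ∃ η : E → ℝ, ContDiff ℝ n η ∧ HasCompactSupport η ∧ tsupport η ⊆ U ∧ EqOn η 1 K ∧
      ∀ x, η x ∈ Icc 0 1 := by
  obtain ⟨L, hL, hKL, hLU⟩ := exists_compact_between hK hU hKU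
  obtain ⟨η, hη1, hη0, hη01⟩ :=
    exists_contMDiffMap_one_nhds_of_subset_interior 𝓘(ℝ, E) (n := n) hK.isClosed hKL
  have hsupp : tsupport η ⊆ L :=
    closure_minimal (fun x hx => by_contra fun h => hx (hη0 x h)) hL.isClosed
  exact ⟨η, contMDiff_iff_contDiff.1 η.contMDiff, hL.of_isClosed_subset (isClosed_tsupport _) hsupp,
    hsupp.trans hLU, fun x hx => hη1.self_of_nhdsSet x hx, hη01⟩

lemma ellipseBoundary_mem_pEllipse {p b : ℝ} (hp : p ≠ 0) (hb : b ≠ 0) (τ : ℝ) :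
    ellipseBoundary p b τ ∈ pEllipse p b := by
  simp only [pEllipse, ellipseBoundary, mem_ofPred_eq, vec2_apply_zero, vec2_apply_one]
  field_simp
  rw [cos_sq_add_sin_sq]

lemma ellipseBoundary_ne_zero {p b : ℝ} (hp : p ≠ 0) (hb : b ≠ 0) (τ : ℝ) :
    ellipseBoundary p b τ ≠ 0 := by
  intro h
  have h0 := congrArg (· 0) h
  have h1 := congrArg (· 1) h
  simp only [ellipseBoundary, vec2_apply_zero, vec2_apply_one, PiLp.zero_apply] at h0 h1
  have := cos_sq_add_sin_sq τ
  simp_all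

lemma contDiffOn_ellipMaximizer {a b : ℝ} {n : WithTop ℕ∞} (ha : a ≠ 0) (hb : b ≠ 0) :
    ContDiffOn ℝ n (fun x : E2 => ellipMaximizer a (b * x 0) (x 1 / b)) {0}ᶜ := by
  have hq : ContDiff ℝ n fun x : E2 => (a * (b * x 0)) ^ 2 + (x 1 / b) ^ 2 := by fun_prop
  have hq0 : ∀ x ∈ ({0}ᶜ : Set E2), (a * (b * x 0)) ^ 2 + (x 1 / b) ^ 2 ≠ 0 := by
    intro x hx h
    obtain ⟨h0, h1⟩ := (add_eq_zero_iff_of_nonneg (sq_nonneg _) (sq_nonneg _)).1 h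
    simp only [pow_eq_zero_iff two_ne_zero, mul_eq_zero, div_eq_zero_iff, ha, hb, false_or,
      or_false] at h0 h1
    exact hx (by ext i; fin_cases i <;> simp [h0, h1])
  have hsqrt : ∀ x ∈ ({0}ᶜ : Set E2), √((a * (b * x 0)) ^ 2 + (x 1 / b) ^ 2) ≠ 0 :=
    fun x hx => (sqrt_pos.2 ((hq0 x hx).lt_of_le' (by positivity))).ne'
  exact ((hq.contDiffOn.sqrt hq0).inv hsqrt).smul
    (contDiff_vec2 (by fun_prop) (by fun_prop)).contDiffOn

theorem exists_Cc1_mem_Ellip_eq_ellipMaximizer {Ω : Set E2} (hΩ : IsOpen Ω) {a b p : ℝ}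
    (ha : a ≠ 0) (hb : b ≠ 0) (hp : p ≠ 0) (hsub : pEllipse p b ⊆ Ω) :
    ∃ v, Cc1 Ω v ∧ (∀ x, v x ∈ Ellip a (π / 2)) ∧
      ∀ τ, v (ellipseBoundary p b τ) = ellipMaximizer a (p * b * cos τ) (p * sin τ) := by
  have hK : IsCompact (range (ellipseBoundary p b)) :=
    Function.Periodic.compact_of_continuous (c := 2 * π) (fun τ => by simp [ellipseBoundary])
      (by positivity) continuous_ellipseBoundary
  have hKU : range (ellipseBoundary p b) ⊆ Ω \ {0} := by
    rintro _ ⟨τ, rfl⟩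
    exact ⟨hsub (ellipseBoundary_mem_pEllipse hp hb τ), ellipseBoundary_ne_zero hp hb τ⟩
  obtain ⟨η, hη, hηc, hηΩ, hη1, hη01⟩ :=
    exists_contDiff_tsupport_subset_eqOn_one (n := 1) hK (hΩ.sdiff isClosed_singleton) hKU
  set w := fun x : E2 => ellipMaximizer a (b * x 0) (x 1 / b)
  refine ⟨fun x => η x • w x, ⟨?_, hηc.smul_right, ?_⟩, fun x => ?_, fun τ => ?_⟩
  · exact (contDiffOn_ellipMaximizer ha hb).contDiff_smul_of_tsupport_subset
      isOpen_compl_singleton hη (hηΩ.trans fun _ hx => hx.2)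
  · exact (tsupport_smul_subset_left _ _).trans (hηΩ.trans sdiff_subset)
  · exact smul_ellipMaximizer_mem_Ellip (abs_le.2 ⟨by linarith [(hη01 x).1], (hη01 x).2⟩) _ _
  · change η _ • w _ = _
    rw [hη1 (mem_range_self τ), Pi.one_apply, one_smul]
    simp only [w, ellipseBoundary, vec2_apply_zero, vec2_apply_one]
    congr 1 <;> field_simp

lemma setIntegral_indicator_one_mul {α : Type*} [MeasurableSpace α] {μ : Measure α} {s t : Set α}
    (hs : MeasurableSet s) (hst : s ⊆ t) (F : α → ℝ) :
    ∫ x in t, s.indicator (fun _ => (1 : ℝ)) x * F x ∂μ = ∫ x in s, F x ∂μ := by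
  simp_rw [← indicator_mul_left, one_mul, setIntegral_indicator hs, inter_eq_right.2 hst]

lemma sqrt_mul_cos_sq_add_mul_sin_sq {p : ℝ} (hp : 0 ≤ p) (a b τ : ℝ) :
    √((a * (p * b * cos τ)) ^ 2 + (p * sin τ) ^ 2) =
      p * √(sin τ ^ 2 + a ^ 2 * b ^ 2 * cos τ ^ 2) := by
  rw [show (a * (p * b * cos τ)) ^ 2 + (p * sin τ) ^ 2 =
      p ^ 2 * (sin τ ^ 2 + a ^ 2 * b ^ 2 * cos τ ^ 2) by ring, sqrt_mul (sq_nonneg p), sqrt_sq hp]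

theorem dtv_ellipse_theta_pi_div_two_general (Ω : Set E2) (hΩo : IsOpen Ω)
    (a b p : ℝ) (ha : 0 < a) (hb : 0 < b) (hp : 0 < p)
    (hsub : pEllipse p b ⊆ Ω) :
    DTV Ω a (Real.pi / 2) ((pEllipse p b).indicator fun _ => (1 : ℝ)) =
      ENNReal.ofReal (p * ∫ τ in (0:ℝ)..(2 * Real.pi),
        Real.sqrt (Real.sin τ ^ 2 + a ^ 2 * b ^ 2 * Real.cos τ ^ 2)) := by
  have hE : MeasurableSet (pEllipse p b) :=
    (isClosed_le (by fun_prop) continuous_const).measurableSet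
  rw [← intervalIntegral.integral_const_mul]
  simp_rw [← sqrt_mul_cos_sq_add_mul_sin_sq hp.le]
  apply le_antisymm
  · refine iSup₂_le fun v ⟨⟨hv, _⟩, hvE⟩ => ENNReal.ofReal_le_ofReal ?_
    have hvc := hv.continuous
    rw [setIntegral_indicator_one_mul hE hsub, integral_pEllipse_divVec hp hb hv]
    exact intervalIntegral.integral_mono_on (by positivity)
      (Continuous.intervalIntegrable (by fun_prop) _ _)
      (Continuous.intervalIntegrable (by fun_prop) _ _) fun τ _ =>
        mul_add_mul_le_sqrt_of_mem_Ellip ha.ne'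
          (hvE _ (hsub (ellipseBoundary_mem_pEllipse hp.ne' hb.ne' τ))) _ _
  · obtain ⟨v, hv, hvE, hvγ⟩ :=
      exists_Cc1_mem_Ellip_eq_ellipMaximizer hΩo ha.ne' hb.ne' hp.ne' hsub
    refine le_iSup₂_of_le v ⟨hv, fun x _ => hvE x⟩ (ENNReal.ofReal_le_ofReal (le_of_eq ?_))
    rw [setIntegral_indicator_one_mul hE hsub, integral_pEllipse_divVec hp hb hv.1]
    exact intervalIntegral.integral_congr fun τ _ => by
      simp only [hvγ, ellipMaximizer_mul_add_mul]

/-- `DTV^{a,π/2}` of the characteristic function of the ellipse `pE^{b,0}`. -/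
theorem dtv_ellipse_theta_pi_div_two (Ω : Set E2) (hΩo : IsOpen Ω)
    (hΩb : Bornology.IsBounded Ω)
    (a b p : ℝ) (ha : 0 < a) (ha1 : a ≤ 1) (hb : 0 < b) (hb1 : b < 1) (hp : 0 < p)
    (hsub : pEllipse p b ⊆ Ω) :
    DTV Ω a (Real.pi / 2) ((pEllipse p b).indicator fun _ => (1 : ℝ)) =
      ENNReal.ofReal (p * ∫ τ in (0:ℝ)..(2 * Real.pi),
        Real.sqrt (Real.sin τ ^ 2 + a ^ 2 * b ^ 2 * Real.cos τ ^ 2)) :=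
  dtv_ellipse_theta_pi_div_two_general Ω hΩo a b p ha hb hp hsub
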